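/- Let Re > 0, let u : ℝ × ℝ³ → ℝ³ be twice continuously differentiable (jointly in (t,x)), let p̃ : ℝ × ℝ³ → ℝ be continuously differentiable, and let f : ℝ × ℝ³ → ℝ³ be continuous. Suppose that for all t ∈ ℝ and x ∈ Ω = [0,1]³ the Lamb-form Navier–Stokes equations hold: ∂ₜu − u × (curl u) + Re⁻¹ curl(curl u) + ∇(½|u|² + p̃) = f and div u = 0, together with the boundary conditions u × n = 0 and ½|u|² + p̃ = 0 on ∂Ω for all t. Then for every t ∈ ℝ the fluid helicity H_f(t) := ∫_Ω u(t,x) · (curl u(t,·))(x) dx is differentiable in t with derivative H_f′(t) = −2 Re⁻¹ ∫_Ω (curl(curl u(t,·)))(x) · (curl u(t,·))(x) dx + 2 ∫_Ω f(t,x) · (curl u(t,·))(x) dx. -/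

import Mathlib

open MeasureTheory

noncomputable section

/-- Points of ℝ³, represented as functions `Fin 3 → ℝ`. -/
abbrev R3 : Type := Fin 3 → ℝ

/-- Partial derivative in the `i`-th coordinate direction. -/
noncomputable def pd (i : Fin 3) (f : R3 → ℝ) (x : R3) : ℝ :=
  fderiv ℝ f x (Pi.single i 1)

/-- Curl of a vector field on ℝ³. -/
noncomputable def vcurl (v : R3 → R3) (x : R3) : R3 :=
  ![pd 1 (fun y => v y 2) x - pd 2 (fun y => v y 1) x,
    pd 2 (fun y => v y 0) x - pd 0 (fun y => v y 2) x,
    pd 0 (fun y => v y 1) x - pd 1 (fun y => v y 0) x]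

/-- Divergence of a vector field on ℝ³. -/
noncomputable def vdiv (v : R3 → R3) (x : R3) : ℝ :=
  pd 0 (fun y => v y 0) x + pd 1 (fun y => v y 1) x + pd 2 (fun y => v y 2) x

/-- Gradient of a scalar field on ℝ³. -/
noncomputable def vgrad (f : R3 → ℝ) (x : R3) : R3 := fun i => pd i f x

/-- Euclidean dot product on ℝ³. -/
def dot3 (a b : R3) : ℝ := a 0 * b 0 + a 1 * b 1 + a 2 * b 2

/-- Cross product on ℝ³. -/
def cross3 (a b : R3) : R3 :=
  ![a 1 * b 2 - a 2 * b 1, a 2 * b 0 - a 0 * b 2, a 0 * b 1 - a 1 * b 0]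

/-- The closed unit cube Ω = [0,1]³. -/
def cube : Set R3 := Set.Icc 0 1

/-- `x` lies on one of the two faces of the cube orthogonal to direction `i`. -/
def onFace (x : R3) (i : Fin 3) : Prop := x i = 0 ∨ x i = 1

/-- `x` lies on the boundary ∂Ω of the cube. -/
def onBdry (x : R3) : Prop := x ∈ cube ∧ ∃ i : Fin 3, onFace x i

/-- Tangential boundary condition `v × n = 0` on ∂Ω: on each face of the cube
the two components of `v` tangential to that face vanish. -/
def TangentialBC (v : R3 → R3) : Prop :=
  ∀ x ∈ cube, ∀ i : Fin 3, onFace x i → ∀ j : Fin 3, j ≠ i → v x j = 0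

/-- Normal boundary condition `v · n = 0` on ∂Ω: on each face of the cube
the component of `v` normal to that face vanishes. -/
def NormalBC (v : R3 → R3) : Prop :=
  ∀ x ∈ cube, ∀ i : Fin 3, onFace x i → v x i = 0

/-- Time derivative ∂ₜu of a time-dependent vector field. -/
noncomputable def dtv (u : ℝ → R3 → R3) (t : ℝ) (x : R3) : R3 :=
  fun i => deriv (fun s => u s x i) t

/-! Differentiating under the integral, `H' = ∫ ∂ₜu · ω + ∫ u · curl ∂ₜu`. Since
`div (∂ₜu × u) = u · curl ∂ₜu - ∂ₜu · curl u` and `∂ₜu × u` has no normal component when `u` has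
no tangential one, the divergence theorem makes the two terms equal, so `H' = 2 ∫ ∂ₜu · ω`.
Dotting the momentum equation with `ω` kills the Lamb term `u × ω`, and `∇p · ω = div (p ω)`
integrates to zero because `div ω = 0` and `p` vanishes on `∂Ω`. -/

open Function ContinuousLinearMap

lemma hasDerivAt_setIntegral_of_continuous {E F : Type*} [TopologicalSpace E] [T2Space E]
    [SecondCountableTopology E] [MeasurableSpace E]
    [OpensMeasurableSpace E] [NormedAddCommGroup F] [NormedSpace ℝ F] [CompleteSpace F]
    {μ : Measure E} [IsFiniteMeasureOnCompacts μ] {K : Set E} (hK : IsCompact K)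
    {Φ Φ' : ℝ → E → F} (hΦ : Continuous (uncurry Φ)) (hΦ' : Continuous (uncurry Φ'))
    (hderiv : ∀ s x, HasDerivAt (fun r => Φ r x) (Φ' s x) s) (t : ℝ) :
    HasDerivAt (fun s => ∫ x in K, Φ s x ∂μ) (∫ x in K, Φ' t x ∂μ) t := by
  obtain ⟨M, hM⟩ := ((isCompact_closedBall t 1).prod hK).exists_bound_of_continuousOn
    hΦ'.continuousOn
  have hslice : ∀ {Ψ : ℝ → E → F}, Continuous (uncurry Ψ) → ∀ s, Continuous (Ψ s) :=
    fun hΨ s => hΨ.comp (continuous_const.prodMk continuous_id)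
  refine (hasDerivAt_integral_of_dominated_loc_of_deriv_le (bound := fun _ => M)
    (Metric.ball_mem_nhds t one_pos)
    (.of_forall fun s => (hslice hΦ s).aestronglyMeasurable)
    ((hslice hΦ t).continuousOn.integrableOn_compact hK)
    (hslice hΦ' t).aestronglyMeasurable ?_ (integrableOn_const hK.measure_ne_top)
    (.of_forall fun x s _ => hderiv s x)).2
  exact (ae_restrict_iff' hK.measurableSet).2 (.of_forall fun x hx s hs =>
    hM (s, x) ⟨Metric.ball_subset_closedBall hs, hx⟩)

section PartialDerivatives

variable {i j : Fin 3} {g h : R3 → ℝ} {x : R3}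

lemma pd_eq_of_hasFDerivAt {D : R3 →L[ℝ] ℝ} (hD : HasFDerivAt g D x) :
    pd i g x = D (Pi.single i 1) := by
  rw [pd, hD.fderiv]

lemma pd_sub (hg : DifferentiableAt ℝ g x) (hh : DifferentiableAt ℝ h x) :
    pd i (fun y => g y - h y) x = pd i g x - pd i h x := by
  rw [pd_eq_of_hasFDerivAt (hg.hasFDerivAt.fun_sub hh.hasFDerivAt), pd, pd]
  rfl

lemma pd_mul (hg : DifferentiableAt ℝ g x) (hh : DifferentiableAt ℝ h x) :
    pd i (fun y => g y * h y) x = pd i g x * h x + g x * pd i h x := by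
  rw [pd_eq_of_hasFDerivAt (hg.hasFDerivAt.fun_mul hh.hasFDerivAt), pd, pd]
  simp only [add_apply, smul_apply, smul_eq_mul]
  ring

lemma contDiff_pd {m n : WithTop ℕ∞} (hg : ContDiff ℝ n g) (hmn : m + 1 ≤ n) (i : Fin 3) :
    ContDiff ℝ m (pd i g) :=
  (hg.fderiv_right hmn).clm_apply contDiff_const

lemma pd_pd_eq_fderiv_fderiv (hg : ContDiff ℝ 2 g) :
    pd i (pd j g) x = fderiv ℝ (fderiv ℝ g) x (Pi.single i 1) (Pi.single j 1) := by
  have hD : Differentiable ℝ (fderiv ℝ g) := (hg.fderiv_right le_rfl).differentiable one_ne_zero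
  change fderiv ℝ (fun y => fderiv ℝ g y (Pi.single j 1)) x _ = _
  simp [fderiv_clm_apply (hD x) (differentiableAt_const _)]

lemma pd_comm (hg : ContDiff ℝ 2 g) : pd i (pd j g) x = pd j (pd i g) x := by
  rw [pd_pd_eq_fderiv_fderiv hg, pd_pd_eq_fderiv_fderiv hg,
    hg.contDiffAt.isSymmSndFDerivAt (by simp)]

end PartialDerivatives

section VectorCalculus

variable {v w : R3 → R3} {q : R3 → ℝ} {x : R3}

lemma vdiv_cross3 (hv : DifferentiableAt ℝ v x) (hw : DifferentiableAt ℝ w x) :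
    vdiv (fun y => cross3 (v y) (w y)) x = dot3 (w x) (vcurl v x) - dot3 (v x) (vcurl w x) := by
  simp (disch := fun_prop) only [vdiv, vcurl, cross3, dot3, Matrix.cons_val_zero,
    Matrix.cons_val_one, Matrix.cons_val_two, Matrix.head_cons, Matrix.tail_cons, pd_sub, pd_mul]
  ring

lemma vdiv_smul (hq : DifferentiableAt ℝ q x) (hw : DifferentiableAt ℝ w x) :
    vdiv (fun y => q y • w y) x = dot3 (vgrad q x) (w x) + q x * vdiv w x := by
  simp (disch := fun_prop) only [vdiv, vgrad, dot3, Pi.smul_apply, smul_eq_mul, pd_mul]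
  ring

lemma vdiv_vcurl (hv : ContDiff ℝ 2 v) : vdiv (vcurl v) x = 0 := by
  have hv' : ∀ k, ContDiff ℝ 2 fun y => v y k := contDiff_pi.1 hv
  have hpd : ∀ i k, Differentiable ℝ (pd i fun y => v y k) := fun i k =>
    (contDiff_pd (hv' k) le_rfl i).differentiable one_ne_zero
  simp (disch := fun_prop) only [vdiv, vcurl, Matrix.cons_val_zero,
    Matrix.cons_val_one, Matrix.cons_val_two, Matrix.head_cons, Matrix.tail_cons, pd_sub]
  rw [pd_comm (hv' 0) (i := 1), pd_comm (hv' 1) (i := 2), pd_comm (hv' 2) (i := 0)]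
  ring

end VectorCalculus

section Regularity

variable {m n : WithTop ℕ∞} {v w : R3 → R3}

lemma contDiff_vcurl (hv : ContDiff ℝ n v) (hmn : m + 1 ≤ n) : ContDiff ℝ m (vcurl v) := by
  have hv' : ∀ i k, ContDiff ℝ m (pd i fun y => v y k) := fun i k =>
    contDiff_pd (contDiff_pi.1 hv k) hmn i
  refine contDiff_pi.2 fun k => ?_
  fin_cases k <;> simpa [vcurl] using (hv' _ _).sub (hv' _ _)

lemma contDiff_vdiv (hv : ContDiff ℝ n v) (hmn : m + 1 ≤ n) : ContDiff ℝ m (vdiv v) := by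
  have hv' : ∀ i k, ContDiff ℝ m (pd i fun y => v y k) := fun i k =>
    contDiff_pd (contDiff_pi.1 hv k) hmn i
  exact ((hv' 0 0).add (hv' 1 1)).add (hv' 2 2)

lemma contDiff_vgrad {q : R3 → ℝ} (hq : ContDiff ℝ n q) (hmn : m + 1 ≤ n) :
    ContDiff ℝ m (vgrad q) :=
  contDiff_pi.2 fun i => contDiff_pd hq hmn i

lemma contDiff_dot3 (hv : ContDiff ℝ n v) (hw : ContDiff ℝ n w) :
    ContDiff ℝ n fun x => dot3 (v x) (w x) := by
  unfold dot3
  fun_prop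

lemma contDiff_cross3 (hv : ContDiff ℝ n v) (hw : ContDiff ℝ n w) :
    ContDiff ℝ n fun x => cross3 (v x) (w x) := by
  refine contDiff_pi.2 fun k => ?_
  fin_cases k <;> simp [cross3] <;> fun_prop

lemma continuous_vcurl (hv : ContDiff ℝ 1 v) : Continuous (vcurl v) :=
  (contDiff_vcurl hv (m := 0) (by norm_num)).continuous

lemma Continuous.dot3 {X : Type*} [TopologicalSpace X] {a b : X → R3} (ha : Continuous a)
    (hb : Continuous b) : Continuous fun x => dot3 (a x) (b x) := by
  unfold _root_.dot3
  fun_prop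

lemma HasDerivAt.dot3 {a b : ℝ → R3} {a' b' : R3} {t : ℝ} (ha : HasDerivAt a a' t)
    (hb : HasDerivAt b b' t) :
    HasDerivAt (fun s => dot3 (a s) (b s)) (dot3 a' (b t) + dot3 (a t) b') t := by
  have h : ∀ k, HasDerivAt (fun s => a s k * b s k) (a' k * b t k + a t k * b' k) t := fun k =>
    (hasDerivAt_pi.1 ha k).mul (hasDerivAt_pi.1 hb k)
  refine (((h 0).add (h 1)).add (h 2)).congr_deriv ?_
  simp only [_root_.dot3]
  ring

lemma isCompact_cube : IsCompact cube := isCompact_Icc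

lemma Continuous.integrableOn_cube {φ : R3 → ℝ} (hφ : Continuous φ) : IntegrableOn φ cube :=
  hφ.integrableOn_Icc

end Regularity

section DivergenceTheorem

lemma TangentialBC.normalBC_cross3 {v w : R3 → R3} (hw : TangentialBC w) :
    NormalBC fun x => cross3 (v x) (w x) := by
  intro x hx i hi
  have hw' := hw x hx i hi
  fin_cases i <;> simp [cross3, hw' 0, hw' 1, hw' 2]

lemma insertNth_mem_cube {i : Fin 3} {c : ℝ} (hc : c ∈ Set.Icc 0 1) {x : Fin 2 → ℝ}
    (hx : x ∈ Set.Icc 0 1) : i.insertNth c x ∈ cube := by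
  constructor <;> intro j <;> induction j using Fin.succAboveCases i
  · simpa using hc.1
  · simpa using hx.1 _
  · simpa using hc.2
  · simpa using hx.2 _

lemma integral_vdiv_eq_zero_of_normalBC {g : R3 → R3} (hg : ContDiff ℝ 1 g) (hbc : NormalBC g) :
    ∫ x in cube, vdiv g x = 0 := by
  have hdiv : ∀ x, vdiv g x = ∑ i : Fin 3, fderiv ℝ g x (Pi.single i 1) i := by
    intro x
    simp [vdiv, Fin.sum_univ_three, pd, fderiv_apply (hg.differentiable one_ne_zero x)]
  have hface : ∀ (i : Fin 3) (c : ℝ), c = 0 ∨ c = 1 →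
      ∫ x in Set.Icc ((0 : R3) ∘ i.succAbove) ((1 : R3) ∘ i.succAbove),
        g (i.insertNth c x) i = 0 := by
    intro i c hc
    refine setIntegral_eq_zero_of_forall_eq_zero fun x hx => hbc _ ?_ i ?_
    · exact insertNth_mem_cube (by rcases hc with rfl | rfl <;> simp) hx
    · simpa [onFace] using hc
  simp_rw [cube, hdiv]
  rw [integral_divergence_of_hasFDerivAt_off_countable 0 1 zero_le_one g _ ∅ Set.countable_empty
    hg.continuous.continuousOn (fun x _ => (hg.differentiable one_ne_zero x).hasFDerivAt)
    (((contDiff_vdiv hg (m := 0) (by norm_num)).continuous.congr hdiv).integrableOn_Icc)]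
  exact Finset.sum_eq_zero fun i _ => by
    rw [hface i ((1 : R3) i) (Or.inr rfl), hface i ((0 : R3) i) (Or.inl rfl), sub_zero]

end DivergenceTheorem

section IntegralIdentities

variable {v w : R3 → R3}

lemma integral_dot3_vcurl_comm (hv : ContDiff ℝ 1 v) (hw : ContDiff ℝ 1 w) (hbc : TangentialBC w) :
    ∫ x in cube, dot3 (w x) (vcurl v x) = ∫ x in cube, dot3 (v x) (vcurl w x) := by
  have hcross := integral_vdiv_eq_zero_of_normalBC (contDiff_cross3 hv hw)
    (hbc.normalBC_cross3 (v := v))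
  simp_rw [vdiv_cross3 (hv.differentiable one_ne_zero _)
    (hw.differentiable one_ne_zero _)] at hcross
  rwa [integral_sub (hw.continuous.dot3 (continuous_vcurl hv)).integrableOn_cube
    (hv.continuous.dot3 (continuous_vcurl hw)).integrableOn_cube, sub_eq_zero] at hcross

lemma integral_dot3_vgrad_vcurl_eq_zero {q : R3 → ℝ} (hq : ContDiff ℝ 1 q) (hv : ContDiff ℝ 2 v)
    (hbc : ∀ x, onBdry x → q x = 0) :
    ∫ x in cube, dot3 (vgrad q x) (vcurl v x) = 0 := by
  have hcurl : ContDiff ℝ 1 (vcurl v) := contDiff_vcurl hv (by norm_num)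
  have hdiv : ∀ x, vdiv (fun y => q y • vcurl v y) x = dot3 (vgrad q x) (vcurl v x) := fun x => by
    rw [vdiv_smul (hq.differentiable one_ne_zero x) (hcurl.differentiable one_ne_zero x),
      vdiv_vcurl hv, mul_zero, add_zero]
  simp_rw [← hdiv]
  refine integral_vdiv_eq_zero_of_normalBC (hq.smul hcurl) fun x hx i hi => ?_
  simp [hbc x ⟨hx, i, hi⟩]

end IntegralIdentities

section TimeDependent

variable {g : ℝ → R3 → ℝ} {u : ℝ → R3 → R3} {m n : WithTop ℕ∞} {s t : ℝ} {x : R3}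

lemma pd_eq_fderiv_uncurry (hg : DifferentiableAt ℝ (uncurry g) (s, x)) (i : Fin 3) :
    pd i (g s) x = fderiv ℝ (uncurry g) (s, x) (0, Pi.single i 1) := by
  have h : HasFDerivAt (g s) _ x := hg.hasFDerivAt.comp x (hasFDerivAt_prodMk_right s x)
  rw [pd_eq_of_hasFDerivAt h]
  simp

lemma hasDerivAt_slice {E F : Type*} [NormedAddCommGroup E] [NormedSpace ℝ E]
    [NormedAddCommGroup F] [NormedSpace ℝ F] {φ : ℝ → E → F} {x : E}
    (hφ : DifferentiableAt ℝ (uncurry φ) (s, x)) :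
    HasDerivAt (fun r => φ r x) (fderiv ℝ (uncurry φ) (s, x) (1, 0)) s := by
  simpa [Function.comp_def] using
    (hφ.hasFDerivAt.comp s (hasFDerivAt_prodMk_left s x)).hasDerivAt

lemma dtv_eq_fderiv_uncurry (hu : DifferentiableAt ℝ (uncurry u) (s, x)) :
    dtv u s x = fderiv ℝ (uncurry u) (s, x) (1, 0) :=
  funext fun k => (hasDerivAt_pi.1 (hasDerivAt_slice hu) k).deriv

lemma hasDerivAt_dtv (hu : DifferentiableAt ℝ (uncurry u) (s, x)) :
    HasDerivAt (fun r => u r x) (dtv u s x) s :=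
  dtv_eq_fderiv_uncurry hu ▸ hasDerivAt_slice hu

lemma contDiff_uncurry_pd (hg : ContDiff ℝ n (uncurry g)) (hmn : m + 1 ≤ n) (i : Fin 3) :
    ContDiff ℝ m (uncurry fun s => pd i (g s)) := by
  have hg' : Differentiable ℝ (uncurry g) :=
    (hg.of_le (le_add_self.trans hmn)).differentiable one_ne_zero
  have : (uncurry fun s => pd i (g s)) = fun p => fderiv ℝ (uncurry g) p (0, Pi.single i 1) :=
    funext fun p => pd_eq_fderiv_uncurry (hg' p) i
  rw [this]
  exact (hg.fderiv_right hmn).clm_apply contDiff_const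

lemma contDiff_uncurry_dtv (hu : ContDiff ℝ n (uncurry u)) (hmn : m + 1 ≤ n) :
    ContDiff ℝ m (uncurry (dtv u)) := by
  have hu' : Differentiable ℝ (uncurry u) :=
    (hu.of_le (le_add_self.trans hmn)).differentiable one_ne_zero
  have : uncurry (dtv u) = fun p => fderiv ℝ (uncurry u) p (1, 0) :=
    funext fun p => dtv_eq_fderiv_uncurry (hu' p)
  rw [this]
  exact (hu.fderiv_right hmn).clm_apply contDiff_const

lemma continuous_uncurry_vcurl (hu : ContDiff ℝ 1 (uncurry u)) :
    Continuous (uncurry fun s => vcurl (u s)) := by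
  have hpd : ∀ i k, Continuous (uncurry fun s => pd i fun y => u s y k) := fun i k =>
    (contDiff_uncurry_pd (contDiff_pi.1 hu k) (m := 0) (by norm_num) i).continuous
  refine continuous_pi fun k => ?_
  fin_cases k
  exacts [(hpd 1 2).sub (hpd 2 1), (hpd 2 0).sub (hpd 0 2), (hpd 0 1).sub (hpd 1 0)]

lemma hasDerivAt_pd_slice (hg : ContDiff ℝ 2 (uncurry g)) (i : Fin 3) :
    HasDerivAt (fun s => pd i (g s) x) (pd i (fun y => deriv (fun r => g r y) t) x) t := by
  have hg1 : Differentiable ℝ (uncurry g) := hg.differentiable two_ne_zero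
  have hD : Differentiable ℝ (fderiv ℝ (uncurry g)) :=
    (hg.fderiv_right le_rfl).differentiable one_ne_zero
  have hslice : (fun s => pd i (g s) x) = fun s => fderiv ℝ (uncurry g) (s, x) (0, Pi.single i 1) :=
    funext fun s => pd_eq_fderiv_uncurry (hg1 _) i
  have hdt : (fun y => deriv (fun r => g r y) t) = fun y => fderiv ℝ (uncurry g) (t, y) (1, 0) :=
    funext fun y => (hasDerivAt_slice (hg1 _)).deriv
  have hspace : HasFDerivAt (fun y => fderiv ℝ (uncurry g) (t, y) (1, 0)) _ x :=
    ((hD _).hasFDerivAt.comp x (hasFDerivAt_prodMk_right t x)).clm_apply (hasFDerivAt_const _ _)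
  have htime : HasDerivAt (fun s => fderiv ℝ (uncurry g) (s, x))
      (fderiv ℝ (fderiv ℝ (uncurry g)) (t, x) (1, 0)) t := by
    simpa [Function.comp_def] using
      ((hD _).hasFDerivAt.comp t (hasFDerivAt_prodMk_left t x)).hasDerivAt
  rw [hslice, hdt, pd_eq_of_hasFDerivAt hspace]
  refine (htime.clm_apply (hasDerivAt_const t ((0 : ℝ), (Pi.single i 1 : R3)))).congr_deriv ?_
  simp [hg.contDiffAt.isSymmSndFDerivAt (by simp) (1, 0)]

lemma hasDerivAt_vcurl_slice (hu : ContDiff ℝ 2 (uncurry u)) :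
    HasDerivAt (fun s => vcurl (u s) x) (vcurl (dtv u t) x) t := by
  have hpd : ∀ i k, HasDerivAt (fun s => pd i (fun y => u s y k) x)
      (pd i (fun y => dtv u t y k) x) t := fun i k =>
    hasDerivAt_pd_slice (g := fun s y => u s y k) (contDiff_pi.1 hu k) i
  refine hasDerivAt_pi.2 fun k => ?_
  fin_cases k
  exacts [(hpd 1 2).sub (hpd 2 1), (hpd 2 0).sub (hpd 0 2), (hpd 0 1).sub (hpd 1 0)]

lemma hasDerivAt_integral_dot3_vcurl (hu : ContDiff ℝ 2 (uncurry u))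
    {K : Set R3} (hK : IsCompact K) (t : ℝ) :
    HasDerivAt (fun s => ∫ x in K, dot3 (u s x) (vcurl (u s) x))
      (∫ x in K, (dot3 (dtv u t x) (vcurl (u t) x) + dot3 (u t x) (vcurl (dtv u t) x))) t := by
  have hu1 : ContDiff ℝ 1 (uncurry u) := hu.of_le one_le_two
  have hdtv : ContDiff ℝ 1 (uncurry (dtv u)) := contDiff_uncurry_dtv hu (by norm_num)
  refine hasDerivAt_setIntegral_of_continuous hK (Φ := fun s x => dot3 (u s x) (vcurl (u s) x))
    (Φ' := fun s x => dot3 (dtv u s x) (vcurl (u s) x) + dot3 (u s x) (vcurl (dtv u s) x))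
    (hu.continuous.dot3 (continuous_uncurry_vcurl hu1))
    ((hdtv.continuous.dot3 (continuous_uncurry_vcurl hu1)).add
      (hu.continuous.dot3 (continuous_uncurry_vcurl hdtv))) (fun s x => ?_) t
  exact (hasDerivAt_dtv (hu1.differentiable one_ne_zero _)).dot3 (hasDerivAt_vcurl_slice hu)

end TimeDependent

lemma dot3_eq_of_momentum {a b c d e w : R3} {r : ℝ} (h : a - cross3 b w + r • c + d = e) :
    dot3 a w = dot3 e w - r * dot3 c w - dot3 d w := by
  subst h
  simp only [dot3, cross3, Pi.add_apply, Pi.sub_apply, Pi.smul_apply, smul_eq_mul,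
    Matrix.cons_val_zero, Matrix.cons_val_one, Matrix.cons_val_two, Matrix.head_cons,
    Matrix.tail_cons]
  ring

theorem navier_stokes_helicity_identity_general (Re : ℝ)
    (u : ℝ → R3 → R3) (pt : ℝ → R3 → ℝ) (f : ℝ → R3 → R3)
    (hu : ContDiff ℝ 2 (Function.uncurry u))
    (hp : ContDiff ℝ 1 (Function.uncurry pt))
    (hf : Continuous (Function.uncurry f))
    (hmom : ∀ t : ℝ, ∀ x ∈ cube,
      dtv u t x - cross3 (u t x) (vcurl (u t) x) + Re⁻¹ • vcurl (vcurl (u t)) x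
        + vgrad (fun y => (1 / 2) * dot3 (u t y) (u t y) + pt t y) x = f t x)
    (hbcu : ∀ t : ℝ, TangentialBC (u t))
    (hbcp : ∀ t : ℝ, ∀ x : R3, onBdry x →
      (1 / 2) * dot3 (u t x) (u t x) + pt t x = 0) :
    ∀ t : ℝ,
      HasDerivAt (fun s => ∫ x in cube, dot3 (u s x) (vcurl (u s) x))
        (-2 * Re⁻¹ * (∫ x in cube, dot3 (vcurl (vcurl (u t)) x) (vcurl (u t) x))
          + 2 * ∫ x in cube, dot3 (f t x) (vcurl (u t) x)) t := by
  intro t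
  have hslice : ContDiff ℝ 2 fun y : R3 => (t, y) := contDiff_prodMk_right t
  have hut : ContDiff ℝ 2 (u t) := hu.comp hslice
  have hdtv : ContDiff ℝ 1 (dtv u t) :=
    (contDiff_uncurry_dtv hu (by norm_num)).comp (hslice.of_le one_le_two)
  have hq : ContDiff ℝ 1 fun y => (1 / 2) * dot3 (u t y) (u t y) + pt t y :=
    (contDiff_const.mul (contDiff_dot3 hut hut)).of_le one_le_two |>.add
      (hp.comp (hslice.of_le one_le_two))
  have hint : ∀ {φ : R3 → R3}, Continuous φ →
      IntegrableOn (fun x => dot3 (φ x) (vcurl (u t) x)) cube := fun hφ =>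
    (hφ.dot3 (continuous_vcurl (hut.of_le one_le_two))).integrableOn_cube
  have hfω := hint (hf.uncurry_left t)
  have hccω := (hint (continuous_vcurl (contDiff_vcurl hut (m := 1) (by norm_num)))).const_mul Re⁻¹
  have hdtv_curl : ∫ x in cube, dot3 (dtv u t x) (vcurl (u t) x)
      = (∫ x in cube, dot3 (f t x) (vcurl (u t) x))
        - Re⁻¹ * ∫ x in cube, dot3 (vcurl (vcurl (u t)) x) (vcurl (u t) x) := by
    rw [setIntegral_congr_fun isCompact_cube.measurableSet
        fun x hx => dot3_eq_of_momentum (hmom t x hx),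
      integral_sub (hfω.fun_sub hccω) (hint (contDiff_vgrad hq (m := 0) (by norm_num)).continuous),
      integral_sub hfω hccω, integral_const_mul,
      integral_dot3_vgrad_vcurl_eq_zero hq hut (hbcp t), sub_zero]
  have hswap := integral_dot3_vcurl_comm hdtv (hut.of_le one_le_two) (hbcu t)
  convert hasDerivAt_integral_dot3_vcurl hu isCompact_cube t using 1
  rw [integral_add (hint hdtv.continuous)
    (hut.continuous.dot3 (continuous_vcurl hdtv)).integrableOn_cube, hswap, hdtv_curl]
  ring

/-- Helicity identity for the Lamb-form Navier–Stokes equations on the unit cube: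
(d/dt) H_f = −2 Re⁻¹ ∫ curl(curl u) · (curl u) + 2 ∫ f · (curl u). -/
theorem navier_stokes_helicity_identity (Re : ℝ) (hRe : 0 < Re)
    (u : ℝ → R3 → R3) (pt : ℝ → R3 → ℝ) (f : ℝ → R3 → R3)
    (hu : ContDiff ℝ 2 (Function.uncurry u))
    (hp : ContDiff ℝ 1 (Function.uncurry pt))
    (hf : Continuous (Function.uncurry f))
    (hmom : ∀ t : ℝ, ∀ x ∈ cube,
      dtv u t x - cross3 (u t x) (vcurl (u t) x) + Re⁻¹ • vcurl (vcurl (u t)) x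
        + vgrad (fun y => (1 / 2) * dot3 (u t y) (u t y) + pt t y) x = f t x)
    (hdiv : ∀ t : ℝ, ∀ x ∈ cube, vdiv (u t) x = 0)
    (hbcu : ∀ t : ℝ, TangentialBC (u t))
    (hbcp : ∀ t : ℝ, ∀ x : R3, onBdry x →
      (1 / 2) * dot3 (u t x) (u t x) + pt t x = 0) :
    ∀ t : ℝ,
      HasDerivAt (fun s => ∫ x in cube, dot3 (u s x) (vcurl (u s) x))
        (-2 * Re⁻¹ * (∫ x in cube, dot3 (vcurl (vcurl (u t)) x) (vcurl (u t) x))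
          + 2 * ∫ x in cube, dot3 (f t x) (vcurl (u t) x)) t :=
  navier_stokes_helicity_identity_general Re u pt f hu hp hf hmom hbcu hbcp
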